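/- arXiv:2010.05519 — 5 statements merged into one kernel-verified Lean document; each statement's English description precedes it below -/
import Mathlib

section
/- In the uniform-price auction with N bidders whose values are i.i.d. from a distribution F supported in [1, D], for any price function P : ℝ≥0^N → ℝ≥0, any coalition I ⊆ {1,…,N} of size m, any true values v_I ∈ ℝ≥0^m for the coalition, any joint deviation b_I ∈ ℝ≥0^m, and any member i ∈ I: E over v_{-I} drawn i.i.d. from F of [ u(v_i, P(b_I, v_{-I})) − u(v_i, P(v_I, v_{-I})) ] ≤ D · Δ_{N,m}^worst, where u(v, p) = (v − p)·1[v ≥ p] is a bidder's utility when facing price p. In particular the auction is (m, ε)-group Bayesian incentive-compatible with ε = D · Δ_{N,m}^worst. -/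
open MeasureTheory ProbabilityTheory Filter

noncomputable section

noncomputable def sortedVal {N : ℕ} (v : Fin N → ℝ) (i : ℕ) : ℝ :=
  (Multiset.sort (↑(List.ofFn v)) (· ≤ ·)).getD (N - i) 0

noncomputable def argmaxIdx (S : Finset ℕ) (f : ℕ → ℝ) : ℕ :=
  WithBot.unbotD 0 ((S.filter fun i => ∀ j ∈ S, f j ≤ f i).max)

noncomputable def ERMIdx (c : ℝ) {N : ℕ} (v : Fin N → ℝ) : ℕ :=
  argmaxIdx ((Finset.Icc 1 N).filter fun i => c * N < (i : ℝ))
    (fun i => (i : ℝ) * sortedVal v i)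

noncomputable def ERM (c : ℝ) {N : ℕ} (v : Fin N → ℝ) : ℝ :=
  sortedVal v (ERMIdx c v)

/-- Incentive-awareness measure `δ_I(v_I, v_{-I})` of a price function `P`,
where the coordinates in `I` are the manipulable ones and `v` records both
`v_I` (on `I`) and `v_{-I}` (off `I`). -/
noncomputable def deltaIdx {N : ℕ} (P : (Fin N → ℝ) → ℝ) (I : Finset (Fin N))
    (v : Fin N → ℝ) : ℝ :=
  1 - sInf {p : ℝ | ∃ b : Fin N → ℝ, (∀ j, 0 ≤ b j) ∧
      p = P fun j => if j ∈ I then b j else v j} / P v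

/-- Worst-case incentive-awareness measure `δ_m^worst(v_{-I})`
(only the coordinates of `v` off `I` matter). -/
noncomputable def deltaWorstIdx {N : ℕ} (P : (Fin N → ℝ) → ℝ) (I : Finset (Fin N))
    (v : Fin N → ℝ) : ℝ :=
  sSup {x : ℝ | ∃ u : Fin N → ℝ, (∀ j, 0 ≤ u j) ∧
      x = deltaIdx P I fun j => if j ∈ I then u j else v j}

/-- `Δ_{N,m}^worst` with explicit index set `I`:
expectation of `δ^worst(v_{-I})` over i.i.d. samples from `μ`. -/
noncomputable def DeltaWorstIdx {N : ℕ} (μ : Measure ℝ) (P : (Fin N → ℝ) → ℝ)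
    (I : Finset (Fin N)) : ℝ :=
  ∫ v : Fin N → ℝ, deltaWorstIdx P I v ∂(Measure.pi fun _ => μ)

/-- The index set `{0, …, m-1}` inside `Fin N`. -/
noncomputable def firstIdx (N m : ℕ) : Finset (Fin N) :=
  Finset.univ.filter fun j => (j : ℕ) < m

/-- The worst-case incentive-awareness measure `Δ_{N,m}^worst`. -/
noncomputable def DeltaWorst {N : ℕ} (μ : Measure ℝ) (P : (Fin N → ℝ) → ℝ) (m : ℕ) : ℝ :=
  DeltaWorstIdx μ P (firstIdx N m)

/-- Append-based incentive-awareness measure `δ_I(v_I, v_{-I})` for `P = ERM^c`. -/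
noncomputable def deltaIA (c : ℝ) {m n : ℕ} (vI : Fin m → ℝ) (w : Fin n → ℝ) : ℝ :=
  1 - sInf {p : ℝ | ∃ b : Fin m → ℝ, (∀ i, 0 ≤ b i) ∧ p = ERM c (Fin.append b w)} /
      ERM c (Fin.append vI w)

/-- Append-based worst-case incentive-awareness measure `δ_m^worst(v_{-I})` for `P = ERM^c`. -/
noncomputable def deltaWorstA (c : ℝ) (m : ℕ) {n : ℕ} (w : Fin n → ℝ) : ℝ :=
  sSup {x : ℝ | ∃ vI : Fin m → ℝ, (∀ i, 0 ≤ vI i) ∧ x = deltaIA c vI w}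

/-- The index `k* = argmax_{i > cN} i·v_i` selected by `ERM^c` when the top `m`
of the `N` samples are fixed to `+∞` and the remaining `N - m` samples are `w`
(so `v_i` for `i > m` is the `(i-m)`-th largest entry of `w`);
ties are broken towards the larger index. -/
noncomputable def kStarInf (c : ℝ) (N m : ℕ) {n : ℕ} (w : Fin n → ℝ) : ℕ :=
  argmaxIdx ((Finset.Icc (m + 1) N).filter fun i => c * N < (i : ℝ))
    (fun i => (i : ℝ) * sortedVal w (i - m))

/-- Interim utility `u^K(v, p)` of a bidder with value `v` in a second price
auction with reserve price `p` among `K` i.i.d. bidders from `μ`. -/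
noncomputable def uK (μ : Measure ℝ) (K : ℕ) (v p : ℝ) : ℝ :=
  ∫ x : Fin (K - 1) → ℝ, max (v - (List.ofFn x).foldr max p) 0 ∂(Measure.pi fun _ => μ)

/-- A distribution on `[0, ∞)` has monotone hazard rate (MHR) if it has a density `f`
whose hazard rate `f v / (1 - F v)` is non-decreasing on its support. -/
def IsMHR (μ : Measure ℝ) : Prop :=
  ∃ f : ℝ → ℝ, (∀ x, 0 ≤ f x) ∧ (∀ x, x < 0 → f x = 0) ∧
    μ = MeasureTheory.volume.withDensity (fun x => ENNReal.ofReal (f x)) ∧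
    MonotoneOn (fun v => f v / (1 - ProbabilityTheory.cdf μ v)) (Function.support f)

/-- `α`-strong regularity: a density `f`, positive on an interval support contained
in `[0, ∞)`, whose virtual value `φ(x) = x - (1 - F x)/f x` satisfies
`φ(y) - φ(x) ≥ α (y - x)` whenever `x < y` on the support. -/
def IsAlphaStronglyRegular (α : ℝ) (μ : Measure ℝ) : Prop :=
  ∃ f : ℝ → ℝ, (∀ x, 0 ≤ f x) ∧
    μ = MeasureTheory.volume.withDensity (fun x => ENNReal.ofReal (f x)) ∧
    Set.OrdConnected (Function.support f) ∧
    (∀ x ∈ Function.support f, 0 ≤ x) ∧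
    (∀ x ∈ Function.support f, ∀ y ∈ Function.support f, x < y →
      α * (y - x) ≤
        (y - (1 - ProbabilityTheory.cdf μ y) / f y) -
          (x - (1 - ProbabilityTheory.cdf μ x) / f x))

end

/-!
For fixed `v_{-I}`, let `q` be the infimum of the prices the coalition can force. Both prices
in the utility gain are at least `q`, and `u(v, ·)` is antitone and `1`-Lipschitz, so the gain
is at most `P(v_I, v_{-I}) - q = P(v_I, v_{-I}) · δ_I(v_I, v_{-I}) ≤ D · δ_m^worst(v_{-I})`.
Integrating over `v_{-I}` gives the bound.
-/

noncomputable def utility (v p : ℝ) : ℝ := if p ≤ v then v - p else 0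

theorem utility_antitone (v : ℝ) : Antitone (utility v) := by
  intro p q hpq
  unfold utility
  split_ifs <;> linarith

theorem utility_sub_utility_le {v p q : ℝ} (hpq : p ≤ q) : utility v p - utility v q ≤ q - p := by
  unfold utility
  split_ifs <;> linarith

section Coalition

variable {N : ℕ} {P : (Fin N → ℝ) → ℝ} {I : Finset (Fin N)}

def coalitionPrices (P : (Fin N → ℝ) → ℝ) (I : Finset (Fin N)) (w : Fin N → ℝ) : Set ℝ :=
  {p | ∃ b : Fin N → ℝ, (∀ j, 0 ≤ b j) ∧ p = P (I.piecewise b w)}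

theorem apply_piecewise_mem_coalitionPrices {b : Fin N → ℝ} (hb : ∀ j, 0 ≤ b j)
    (w : Fin N → ℝ) : P (I.piecewise b w) ∈ coalitionPrices P I w :=
  ⟨b, hb, rfl⟩

theorem sInf_coalitionPrices_nonneg (hP : ∀ x, 0 ≤ P x) (w : Fin N → ℝ) :
    0 ≤ sInf (coalitionPrices P I w) :=
  Real.sInf_nonneg (by rintro p ⟨b, -, rfl⟩; exact hP _)

theorem sInf_coalitionPrices_le (hP : ∀ x, 0 ≤ P x) {b : Fin N → ℝ} (hb : ∀ j, 0 ≤ b j)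
    (w : Fin N → ℝ) : sInf (coalitionPrices P I w) ≤ P (I.piecewise b w) :=
  csInf_le ⟨0, by rintro p ⟨b, -, rfl⟩; exact hP _⟩ (apply_piecewise_mem_coalitionPrices hb w)

theorem deltaIdx_piecewise (u w : Fin N → ℝ) :
    deltaIdx P I (I.piecewise u w) = 1 - sInf (coalitionPrices P I w) / P (I.piecewise u w) := by
  change 1 - sInf (coalitionPrices P I (I.piecewise u w)) / _ = _
  simp only [coalitionPrices, Finset.piecewise_idem_right]

theorem deltaIdx_le_one (hP : ∀ x, 0 ≤ P x) (v : Fin N → ℝ) : deltaIdx P I v ≤ 1 := by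
  rw [← Finset.piecewise_same I v, deltaIdx_piecewise, sub_le_self_iff]
  exact div_nonneg (sInf_coalitionPrices_nonneg hP v) (hP _)

theorem deltaIdx_piecewise_nonneg (hP : ∀ x, 0 ≤ P x) {u : Fin N → ℝ} (hu : ∀ j, 0 ≤ u j)
    (w : Fin N → ℝ) : 0 ≤ deltaIdx P I (I.piecewise u w) := by
  rw [deltaIdx_piecewise, sub_nonneg]
  exact div_le_one_of_le₀ (sInf_coalitionPrices_le hP hu w) (hP _)

theorem sub_sInf_coalitionPrices_le (hP : ∀ x, 0 ≤ P x) (u w : Fin N → ℝ) :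
    P (I.piecewise u w) - sInf (coalitionPrices P I w) ≤
      P (I.piecewise u w) * deltaIdx P I (I.piecewise u w) := by
  have hq := sInf_coalitionPrices_nonneg (I := I) hP w
  rw [deltaIdx_piecewise]
  rcases (hP (I.piecewise u w)).eq_or_lt with hv | hv
  · rw [← hv]; linarith
  · rw [mul_sub, mul_div_cancel₀ _ hv.ne']; linarith

theorem deltaIdx_le_deltaWorstIdx (hP : ∀ x, 0 ≤ P x) {u : Fin N → ℝ} (hu : ∀ j, 0 ≤ u j)
    (w : Fin N → ℝ) : deltaIdx P I (I.piecewise u w) ≤ deltaWorstIdx P I w := by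
  refine le_csSup ⟨1, ?_⟩ ⟨u, hu, rfl⟩
  rintro x ⟨u', -, rfl⟩
  exact deltaIdx_le_one hP _

theorem deltaWorstIdx_nonneg (hP : ∀ x, 0 ≤ P x) (w : Fin N → ℝ) : 0 ≤ deltaWorstIdx P I w :=
  (deltaIdx_piecewise_nonneg hP (fun _ => le_rfl) w).trans
    (deltaIdx_le_deltaWorstIdx hP (u := 0) (fun _ => le_rfl) w)

theorem utility_gain_le_mul_deltaWorstIdx {D : ℝ} (hP : ∀ x, 0 ≤ P x ∧ P x ≤ D)
    {v b : Fin N → ℝ} (hv : ∀ j, 0 ≤ v j) (hb : ∀ j, 0 ≤ b j) (x : ℝ) (w : Fin N → ℝ) :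
    utility x (P (I.piecewise b w)) - utility x (P (I.piecewise v w)) ≤
      D * deltaWorstIdx P I w := by
  have hP0 : ∀ y, 0 ≤ P y := fun y => (hP y).1
  calc utility x (P (I.piecewise b w)) - utility x (P (I.piecewise v w))
      ≤ utility x (sInf (coalitionPrices P I w)) - utility x (P (I.piecewise v w)) :=
        sub_le_sub_right (utility_antitone x (sInf_coalitionPrices_le hP0 hb w)) _
    _ ≤ P (I.piecewise v w) - sInf (coalitionPrices P I w) :=
        utility_sub_utility_le (sInf_coalitionPrices_le hP0 hv w)
    _ ≤ P (I.piecewise v w) * deltaIdx P I (I.piecewise v w) := sub_sInf_coalitionPrices_le hP0 v w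
    _ ≤ D * deltaIdx P I (I.piecewise v w) :=
        mul_le_mul_of_nonneg_right (hP _).2 (deltaIdx_piecewise_nonneg hP0 hv w)
    _ ≤ D * deltaWorstIdx P I w :=
        mul_le_mul_of_nonneg_left (deltaIdx_le_deltaWorstIdx hP0 hv w) ((hP w).1.trans (hP w).2)

end Coalition

open MeasureTheory ProbabilityTheory Filter in
theorem uniformPrice_group_BIC_general (N : ℕ) (D : ℝ) (μ : Measure ℝ)
    (P : (Fin N → ℝ) → ℝ) (hP : ∀ x, 0 ≤ P x ∧ P x ≤ D)
    (I : Finset (Fin N)) (hInt : Integrable (deltaWorstIdx P I) (Measure.pi fun _ : Fin N => μ))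
    (vI : Fin N → ℝ) (hvI : ∀ j, 0 ≤ vI j)
    (bI : Fin N → ℝ) (hbI : ∀ j, 0 ≤ bI j)
    (i : Fin N) :
    (∫ w : Fin N → ℝ,
        ((if P (fun j => if j ∈ I then bI j else w j) ≤ vI i then
            vI i - P (fun j => if j ∈ I then bI j else w j) else 0)
          - (if P (fun j => if j ∈ I then vI j else w j) ≤ vI i then
              vI i - P (fun j => if j ∈ I then vI j else w j) else 0))
        ∂(Measure.pi fun _ : Fin N => μ))
      ≤ D * DeltaWorstIdx μ P I := by
  change ∫ w, utility (vI i) (P (I.piecewise bI w)) - utility (vI i) (P (I.piecewise vI w))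
    ∂(Measure.pi fun _ : Fin N => μ) ≤ _
  have hgain := utility_gain_le_mul_deltaWorstIdx (I := I) hP hvI hbI (vI i)
  by_cases hf : Integrable (fun w => utility (vI i) (P (I.piecewise bI w)) -
      utility (vI i) (P (I.piecewise vI w))) (Measure.pi fun _ : Fin N => μ)
  · rw [DeltaWorstIdx, ← integral_const_mul]
    exact integral_mono hf (hInt.const_mul D) hgain
  · rw [integral_undef hf]
    exact mul_nonneg ((hP bI).1.trans (hP bI).2)
      (integral_nonneg (deltaWorstIdx_nonneg fun x => (hP x).1))

open MeasureTheory ProbabilityTheory Filter in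
/-- In the uniform-price auction with `N` bidders with values i.i.d.
from a distribution supported in `[1, D]` and any price function `P` (taking values in
`[0, D]`), for any coalition `I` of size `m` with true values `vI`, any joint deviation
`bI`, and any member `i ∈ I`, the expected utility gain of `i` is at most
`D · Δ_{N,m}^worst`; i.e., the auction is `(m, D·Δ_{N,m}^worst)`-group BIC.
Here `u(v, p) = (v - p)·1[v ≥ p]`. -/
theorem uniformPrice_group_BIC (N m : ℕ) (D : ℝ) (hD : 1 ≤ D)
    (μ : Measure ℝ) (hμ : IsProbabilityMeasure μ) (hsupp : μ (Set.Icc 1 D)ᶜ = 0)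
    (P : (Fin N → ℝ) → ℝ) (hP : ∀ x, 0 ≤ P x ∧ P x ≤ D)
    (I : Finset (Fin N)) (hI : I.card = m)
    (hInt : Integrable (deltaWorstIdx P I) (Measure.pi fun _ : Fin N => μ))
    (vI : Fin N → ℝ) (hvI : ∀ j, 0 ≤ vI j)
    (bI : Fin N → ℝ) (hbI : ∀ j, 0 ≤ bI j)
    (i : Fin N) (hi : i ∈ I) :
    (∫ w : Fin N → ℝ,
        ((if P (fun j => if j ∈ I then bI j else w j) ≤ vI i then
            vI i - P (fun j => if j ∈ I then bI j else w j) else 0)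
          - (if P (fun j => if j ∈ I then vI j else w j) ≤ vI i then
              vI i - P (fun j => if j ∈ I then vI j else w j) else 0))
        ∂(Measure.pi fun _ : Fin N => μ))
      ≤ D * DeltaWorstIdx μ P I :=
  uniformPrice_group_BIC_general N D μ P hP I hInt vI hvI bI hbI i
end

section
/- Let R : [0,1] → ℝ be continuously differentiable with R(0) = 0, and let q* ∈ [0,1] satisfy R'(q) ≥ 0 for all q ≤ q* and R'(q) ≤ 0 for all q ≥ q*. Let x : [0,1] → [0,∞) be non-increasing, let q₀ ∈ [0,1] and ε ∈ [0,1). If R(q₀) ≥ (1−ε)·R(q*), then ∫_0^{q₀} R'(q)·x(q) dq ≥ (1−ε)·∫_0^{q*} R'(q)·x(q) dq. (This is the quantile-space form of the statement that, for a regular value distribution with revenue curve R, if a posted price with quantile q₀ is (1−ε)-revenue-optimal for a single bidder, then a k-unit Vickrey auction with the same reserve price among K ≥ 2 i.i.d. bidders — whose winning probability x(q) is a non-increasing function of the bidder's quantile q — is also (1−ε)-revenue-optimal.) -/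
open MeasureTheory intervalIntegral in
/-- quantile-space form of Lemma on one-to-many revenue optimality.
Let `R` be continuously differentiable on `[0,1]` with `R 0 = 0` and derivative `R'`
which is nonnegative before `q*` and nonpositive after `q*`. If `x` is non-increasing
and nonnegative on `[0,1]`, `q₀ ∈ [0,1]`, `ε ∈ [0,1)` and `R q₀ ≥ (1-ε)·R q*`, then
`∫_0^{q₀} R'(q)·x(q) dq ≥ (1-ε)·∫_0^{q*} R'(q)·x(q) dq`. -/
theorem revenue_one_to_many (R R' : ℝ → ℝ)
    (hR : ∀ q ∈ Set.Icc (0 : ℝ) 1, HasDerivWithinAt R (R' q) (Set.Icc (0 : ℝ) 1) q)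
    (hR' : ContinuousOn R' (Set.Icc (0 : ℝ) 1))
    (hR0 : R 0 = 0)
    (qstar : ℝ) (hqstar : qstar ∈ Set.Icc (0 : ℝ) 1)
    (hup : ∀ q ∈ Set.Icc (0 : ℝ) 1, q ≤ qstar → 0 ≤ R' q)
    (hdown : ∀ q ∈ Set.Icc (0 : ℝ) 1, qstar ≤ q → R' q ≤ 0)
    (x : ℝ → ℝ) (hmono : AntitoneOn x (Set.Icc (0 : ℝ) 1))
    (hxnn : ∀ q ∈ Set.Icc (0 : ℝ) 1, 0 ≤ x q)
    (q₀ : ℝ) (hq₀ : q₀ ∈ Set.Icc (0 : ℝ) 1)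
    (ε : ℝ) (hε0 : 0 ≤ ε) (hε1 : ε < 1)
    (hrev : (1 - ε) * R qstar ≤ R q₀) :
    (1 - ε) * ∫ q in (0 : ℝ)..qstar, R' q * x q ≤ ∫ q in (0 : ℝ)..q₀, R' q * x q := by
  have hcont : ContinuousOn R (Set.Icc (0:ℝ) 1) := fun q hq => (hR q hq).continuousWithinAt
  -- integrability of R' * x on subintervals
  have hIint : ∀ a b, a ∈ Set.Icc (0:ℝ) 1 → b ∈ Set.Icc (0:ℝ) 1 →
      IntervalIntegrable (fun q => R' q * x q) volume a b := by
    intro a b ha hb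
    have hsub : Set.uIcc a b ⊆ Set.Icc (0:ℝ) 1 := Set.uIcc_subset_Icc ha hb
    exact ((hmono.mono hsub).intervalIntegrable).continuousOn_mul (hR'.mono hsub)
  have hR'int : ∀ a b, a ∈ Set.Icc (0:ℝ) 1 → b ∈ Set.Icc (0:ℝ) 1 →
      IntervalIntegrable R' volume a b := by
    intro a b ha hb
    exact (hR'.mono (Set.uIcc_subset_Icc ha hb)).intervalIntegrable
  -- FTC
  have ftc : ∀ a b, a ∈ Set.Icc (0:ℝ) 1 → b ∈ Set.Icc (0:ℝ) 1 → a ≤ b →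
      ∫ q in a..b, R' q = R b - R a := by
    intro a b ha hb hab
    have hsub : Set.Icc a b ⊆ Set.Icc (0:ℝ) 1 := Set.Icc_subset_Icc ha.1 hb.2
    refine intervalIntegral.integral_eq_sub_of_hasDeriv_right_of_le hab
      (hcont.mono hsub) (fun t ht => ?_) (hR'int a b ha hb)
    have htmem : t ∈ Set.Icc (0:ℝ) 1 := hsub (Set.Ioo_subset_Icc_self ht)
    have : HasDerivAt R (R' t) t := by
      exact (hR t htmem).hasDerivAt (Icc_mem_nhds (lt_of_le_of_lt ha.1 ht.1)
        (lt_of_lt_of_le ht.2 hb.2))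
    exact this.hasDerivWithinAt
  -- constant integral
  have constInt : ∀ a b c, a ∈ Set.Icc (0:ℝ) 1 → b ∈ Set.Icc (0:ℝ) 1 → a ≤ b →
      ∫ q in a..b, R' q * c = (R b - R a) * c := by
    intro a b c ha hb hab
    rw [intervalIntegral.integral_mul_const, ftc a b ha hb hab]
  have hIcc01 : ∀ a, a ∈ Set.Icc (0:ℝ) 1 → ∀ t, t ∈ Set.Icc a (1:ℝ) ∨ t ∈ Set.Icc (0:ℝ) a →
      t ∈ Set.Icc (0:ℝ) 1 := by
    intro a ha t ht
    rcases ht with ht | ht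
    · exact ⟨le_trans ha.1 ht.1, ht.2⟩
    · exact ⟨ht.1, le_trans ht.2 ha.2⟩
  rcases le_or_gt q₀ qstar with hcase | hcase
  · -- q₀ ≤ qstar
    -- I* = I₀ + J
    have hsplit : (∫ q in (0:ℝ)..qstar, R' q * x q)
        = (∫ q in (0:ℝ)..q₀, R' q * x q) + ∫ q in q₀..qstar, R' q * x q :=
      (intervalIntegral.integral_add_adjacent_intervals
        (hIint 0 q₀ (Set.left_mem_Icc.2 zero_le_one) hq₀)
        (hIint q₀ qstar hq₀ hqstar)).symm
    -- lower bound on I₀ : x q₀ * R q₀ ≤ I₀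
    have hlow : R q₀ * x q₀ ≤ ∫ q in (0:ℝ)..q₀, R' q * x q := by
      have h1 : ∫ q in (0:ℝ)..q₀, R' q * x q₀ ≤ ∫ q in (0:ℝ)..q₀, R' q * x q := by
        refine intervalIntegral.integral_mono_on hq₀.1
          ((hR'int 0 q₀ (Set.left_mem_Icc.2 zero_le_one) hq₀).mul_const _)
          (hIint 0 q₀ (Set.left_mem_Icc.2 zero_le_one) hq₀) (fun t ht => ?_)
        have htm : t ∈ Set.Icc (0:ℝ) 1 := ⟨ht.1, le_trans ht.2 hq₀.2⟩
        have hR'nn : 0 ≤ R' t := hup t htm (le_trans ht.2 hcase)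
        have hx : x q₀ ≤ x t := hmono htm hq₀ ht.2
        exact mul_le_mul_of_nonneg_left hx hR'nn
      rw [constInt 0 q₀ (x q₀) (Set.left_mem_Icc.2 zero_le_one) hq₀ hq₀.1, hR0, sub_zero] at h1
      exact h1
    -- upper bound on J : J ≤ x q₀ * (R qstar - R q₀)
    have hJ : (∫ q in q₀..qstar, R' q * x q) ≤ (R qstar - R q₀) * x q₀ := by
      have h1 : ∫ q in q₀..qstar, R' q * x q ≤ ∫ q in q₀..qstar, R' q * x q₀ := by
        refine intervalIntegral.integral_mono_on hcase (hIint q₀ qstar hq₀ hqstar)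
          ((hR'int q₀ qstar hq₀ hqstar).mul_const _) (fun t ht => ?_)
        have htm : t ∈ Set.Icc (0:ℝ) 1 := ⟨le_trans hq₀.1 ht.1, le_trans ht.2 hqstar.2⟩
        have hR'nn : 0 ≤ R' t := hup t htm ht.2
        have hx : x t ≤ x q₀ := hmono hq₀ htm ht.1
        exact mul_le_mul_of_nonneg_left hx hR'nn
      rwa [constInt q₀ qstar (x q₀) hq₀ hqstar hcase] at h1
    have hx0nn : 0 ≤ x q₀ := hxnn q₀ hq₀
    have hR0nn : 0 ≤ R q₀ := by
      have := ftc 0 q₀ (Set.left_mem_Icc.2 zero_le_one) hq₀ hq₀.1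
      rw [hR0, sub_zero] at this
      rw [← this]
      refine intervalIntegral.integral_nonneg hq₀.1 (fun t ht => ?_)
      exact hup t ⟨ht.1, le_trans ht.2 hq₀.2⟩ (le_trans ht.2 hcase)
    nlinarith [mul_le_mul_of_nonneg_left hrev hx0nn]
  · -- qstar ≤ q₀
    have hcase' := hcase.le
    have hsplit : (∫ q in (0:ℝ)..q₀, R' q * x q)
        = (∫ q in (0:ℝ)..qstar, R' q * x q) + ∫ q in qstar..q₀, R' q * x q :=
      (intervalIntegral.integral_add_adjacent_intervals
        (hIint 0 qstar (Set.left_mem_Icc.2 zero_le_one) hqstar)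
        (hIint qstar q₀ hqstar hq₀)).symm
    -- lower bound: x qstar * R qstar ≤ I*
    have hlow : R qstar * x qstar ≤ ∫ q in (0:ℝ)..qstar, R' q * x q := by
      have h1 : ∫ q in (0:ℝ)..qstar, R' q * x qstar ≤ ∫ q in (0:ℝ)..qstar, R' q * x q := by
        refine intervalIntegral.integral_mono_on hqstar.1
          ((hR'int 0 qstar (Set.left_mem_Icc.2 zero_le_one) hqstar).mul_const _)
          (hIint 0 qstar (Set.left_mem_Icc.2 zero_le_one) hqstar) (fun t ht => ?_)
        have htm : t ∈ Set.Icc (0:ℝ) 1 := ⟨ht.1, le_trans ht.2 hqstar.2⟩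
        have hR'nn : 0 ≤ R' t := hup t htm ht.2
        have hx : x qstar ≤ x t := hmono htm hqstar ht.2
        exact mul_le_mul_of_nonneg_left hx hR'nn
      rw [constInt 0 qstar (x qstar) (Set.left_mem_Icc.2 zero_le_one) hqstar hqstar.1,
        hR0, sub_zero] at h1
      exact h1
    -- lower bound on J : x qstar * (R q₀ - R qstar) ≤ J
    have hJ : (R q₀ - R qstar) * x qstar ≤ ∫ q in qstar..q₀, R' q * x q := by
      have h1 : ∫ q in qstar..q₀, R' q * x qstar ≤ ∫ q in qstar..q₀, R' q * x q := by
        refine intervalIntegral.integral_mono_on hcase'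
          ((hR'int qstar q₀ hqstar hq₀).mul_const _)
          (hIint qstar q₀ hqstar hq₀) (fun t ht => ?_)
        have htm : t ∈ Set.Icc (0:ℝ) 1 := ⟨le_trans hqstar.1 ht.1, le_trans ht.2 hq₀.2⟩
        have hR'np : R' t ≤ 0 := hdown t htm ht.1
        have hx : x t ≤ x qstar := hmono hqstar htm ht.1
        nlinarith
      rwa [constInt qstar q₀ (x qstar) hqstar hq₀ hcase'] at h1
    have hxsnn : 0 ≤ x qstar := hxnn qstar hqstar
    nlinarith [mul_le_mul_of_nonneg_left hrev hxsnn]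
end

section
/- Let P = ERM^c with c ≥ m/N. For any v_I ∈ ℝ≥0^m and v_{-I} ∈ ℝ≥0^{N−m}, let v̄_I ∈ ℝ≥0^m be any m values satisfying min v̄_I ≥ max v_{-I}. Then P(v̄_I, v_{-I}) ≥ P(v_I, v_{-I}). -/
open MeasureTheory ProbabilityTheory Filter

/-!
Count, for a price `x`, the samples that are at least `x`; the `i`-th largest sample is at
least `x` iff at least `i` samples are. Let `k`, `t` be the index and price chosen on
`(v_I, v_{-I})`, and `k'`, `u` those chosen on `(v̄_I, v_{-I})`. Since `c ≥ m / N`, every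
admissible index exceeds `m`, so some sample of `v_{-I}` is at least `t`, and then all of
`v̄_I` is too: `j := #{samples of (v̄_I, v_{-I}) ≥ t}` is an admissible index `≥ k`. If
`u < t`, then `k' > j`, and `q := #{samples of (v_I, v_{-I}) ≥ u}` satisfies `k k' ≤ q j`
(a rearrangement inequality). Optimality of `k'` against `j` gives `j t ≤ k' u`, hence
`k t ≤ q u`: the larger index `q` would do at least as well as `k` on `(v_I, v_{-I})`,
contradicting the tie-breaking towards larger indices.
-/

namespace List

theorem SortedLE.le_getElem_iff_length_sub_le_countP {α : Type*} [LinearOrder α] {l : List α}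
    (hl : l.SortedLE) {t : α} {i : ℕ} (hi : i < l.length) :
    t ≤ l[i] ↔ l.length - i ≤ l.countP (t ≤ ·) := by
  constructor
  · intro ht
    calc l.length - i = (l.drop i).countP (t ≤ ·) := by
          rw [countP_eq_length.2, length_drop]
          intro x hx
          obtain ⟨j, hj, rfl⟩ := mem_iff_getElem.1 hx
          simpa using ht.trans (hl.getElem_le_getElem_of_le (by omega))
      _ ≤ l.countP (t ≤ ·) := (drop_sublist i l).countP_le
  · contrapose!
    intro hlt
    have htake : (l.take (i + 1)).countP (t ≤ ·) = 0 := by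
      rw [countP_eq_zero]
      intro x hx
      obtain ⟨j, hj, rfl⟩ := mem_iff_getElem.1 hx
      rw [length_take] at hj
      simpa using (hl.getElem_le_getElem_of_le (by omega : j ≤ i)).trans_lt hlt
    have hsplit := congrArg (countP (t ≤ ·)) (take_append_drop (i + 1) l)
    have hdrop := (l.drop (i + 1)).countP_le_length (p := (t ≤ ·))
    rw [countP_append, htake, zero_add] at hsplit
    rw [length_drop] at hdrop
    omega

end List

noncomputable def countGE {N : ℕ} (v : Fin N → ℝ) (t : ℝ) : ℕ :=
  (List.ofFn v).countP (t ≤ ·)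

section countGE

variable {m n N : ℕ}

theorem countGE_le (v : Fin N → ℝ) (t : ℝ) : countGE v t ≤ N :=
  List.countP_le_length.trans_eq (List.length_ofFn)

theorem countGE_antitone (v : Fin N → ℝ) : Antitone (countGE v) := fun _ _ hst =>
  List.countP_mono_left fun _ _ hx => by simpa using hst.trans (by simpa using hx)

theorem countGE_append (a : Fin m → ℝ) (b : Fin n → ℝ) (t : ℝ) :
    countGE (Fin.append a b) t = countGE a t + countGE b t := by
  rw [countGE, List.ofFn_fin_append, List.countP_append, countGE, countGE]

theorem countGE_append_le (a : Fin m → ℝ) (b : Fin n → ℝ) (t : ℝ) :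
    countGE (Fin.append a b) t ≤ m + countGE b t := by
  rw [countGE_append]
  exact Nat.add_le_add_right (countGE_le a t) _

theorem countGE_append_of_le {a : Fin m → ℝ} {b : Fin n → ℝ} (hab : ∀ i j, b j ≤ a i) {t : ℝ}
    (ht : 0 < countGE b t) : countGE (Fin.append a b) t = m + countGE b t := by
  obtain ⟨x, hx, htx⟩ := List.countP_pos_iff.1 ht
  obtain ⟨j, rfl⟩ := List.mem_ofFn.1 hx
  have : countGE a t = m := by
    rw [countGE, List.countP_eq_length.2, List.length_ofFn]
    intro y hy
    obtain ⟨i, rfl⟩ := List.mem_ofFn.1 hy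
    simpa using (by simpa using htx : t ≤ b j).trans (hab i j)
  rw [countGE_append, this]

theorem countGE_append_le_countGE_append {vI vbar : Fin m → ℝ} {w : Fin n → ℝ}
    (hvbar : ∀ i j, w j ≤ vbar i) {t : ℝ} (hm : m < countGE (Fin.append vI w) t) :
    countGE (Fin.append vI w) t ≤ countGE (Fin.append vbar w) t := by
  have hw : 0 < countGE w t := by have := countGE_append_le vI w t; omega
  rw [countGE_append_of_le hvbar hw]
  exact countGE_append_le vI w t

theorem mul_le_countGE_mul_countGE {vI vbar : Fin m → ℝ} {w : Fin n → ℝ}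
    (hvbar : ∀ i j, w j ≤ vbar i) {t u : ℝ} {k k' : ℕ} (hmk : m < k)
    (hk : k ≤ countGE (Fin.append vI w) t) (hk' : k' ≤ countGE (Fin.append vbar w) u)
    (hk't : countGE (Fin.append vbar w) t < k') :
    k * k' ≤ countGE (Fin.append vI w) u * countGE (Fin.append vbar w) t := by
  have hut : u < t := lt_of_not_ge fun htu => hk't.not_ge (hk'.trans (countGE_antitone _ htu))
  rw [countGE_append] at hk ⊢
  have hr := countGE_le vI t
  have hp : 0 < countGE w t := by omega
  rw [countGE_append_of_le hvbar hp] at hk't ⊢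
  have hru := countGE_antitone vI hut.le
  have hx := hk'.trans (countGE_append_le vbar w u)
  have hpx : countGE w t ≤ countGE w u := by omega
  -- with `r = countGE vI t`, `p = countGE w t`, `x = countGE w u`, rearrangement gives
  -- `k * k' ≤ (r + p) * (m + x) ≤ (r + x) * (m + p)`, as `r ≤ m` and `p ≤ x`
  nlinarith [Nat.mul_le_mul hk hx, mul_add_mul_le_mul_add_mul hr hpx]

end countGE

section sortedVal

variable {N : ℕ}

theorem sortedVal_zero (v : Fin N → ℝ) : sortedVal v 0 = 0 :=
  List.getD_eq_default _ _ (by simp)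

theorem sortedVal_eq_getElem (v : Fin N → ℝ) {i : ℕ} (hi : 1 ≤ i) (hiN : i ≤ N) :
    sortedVal v i = (Multiset.sort (↑(List.ofFn v)) (· ≤ ·))[N - i]'
      (by rw [Multiset.length_sort, Multiset.coe_card, List.length_ofFn]; omega) :=
  List.getD_eq_getElem _ _ _

theorem sortedVal_nonneg {v : Fin N → ℝ} (hv : ∀ j, 0 ≤ v j) (i : ℕ) : 0 ≤ sortedVal v i := by
  rw [sortedVal]
  rcases lt_or_ge (N - i) (Multiset.sort (↑(List.ofFn v) : Multiset ℝ) (· ≤ ·)).length with h | h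
  · rw [List.getD_eq_getElem _ _ h]
    obtain ⟨j, hj⟩ :=
      List.mem_ofFn.1 (Multiset.mem_coe.1 ((Multiset.mem_sort _).1 (List.getElem_mem h)))
    exact hj ▸ hv j
  · rw [List.getD_eq_default _ _ h]

theorem le_sortedVal_iff (v : Fin N → ℝ) {t : ℝ} {i : ℕ} (hi : 1 ≤ i) (hiN : i ≤ N) :
    t ≤ sortedVal v i ↔ i ≤ countGE v t := by
  have hperm : (List.ofFn v).Perm (Multiset.sort (↑(List.ofFn v)) (· ≤ ·)) := by
    rw [← Multiset.coe_eq_coe, Multiset.sort_eq]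
  rw [sortedVal_eq_getElem v hi hiN,
    (Multiset.pairwise_sort _ _).sortedLE.le_getElem_iff_length_sub_le_countP,
    countGE, hperm.countP_eq]
  simp only [Multiset.length_sort, Multiset.coe_card, List.length_ofFn]
  omega

end sortedVal

theorem isGreatest_argmaxIdx {S : Finset ℕ} (hS : S.Nonempty) (f : ℕ → ℝ) :
    IsGreatest {i | i ∈ S ∧ ∀ j ∈ S, f j ≤ f i} (argmaxIdx S f) := by
  obtain ⟨x, hx, hxmax⟩ := S.exists_max_image f hS
  have hT : (S.filter fun i => ∀ j ∈ S, f j ≤ f i).Nonempty := ⟨x, Finset.mem_filter.2 ⟨hx, hxmax⟩⟩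
  rw [argmaxIdx, ← Finset.coe_max' hT, WithBot.unbotD_coe]
  simpa using Finset.isGreatest_max' _ hT

noncomputable def ermRange (c : ℝ) (N : ℕ) : Finset ℕ :=
  (Finset.Icc 1 N).filter fun i => c * N < (i : ℝ)

section ERM

variable {c : ℝ} {N : ℕ}

theorem mem_ermRange {i : ℕ} : i ∈ ermRange c N ↔ 1 ≤ i ∧ i ≤ N ∧ c * N < i := by
  rw [ermRange, Finset.mem_filter, Finset.mem_Icc, and_assoc]

theorem ermRange_nonempty_iff : (ermRange c N).Nonempty ↔ c * N < N := by
  refine ⟨fun ⟨i, hi⟩ => ?_, fun h => ⟨N, mem_ermRange.2 ⟨?_, le_rfl, h⟩⟩⟩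
  · obtain ⟨-, hiN, hci⟩ := mem_ermRange.1 hi
    exact hci.trans_le (by exact_mod_cast hiN)
  · by_contra! hN
    simp [Nat.lt_one_iff.1 hN] at h

theorem lt_of_mem_ermRange {m i : ℕ} (hc : (m : ℝ) / N ≤ c) (hi : i ∈ ermRange c N) : m < i := by
  obtain ⟨hi1, hiN, hci⟩ := mem_ermRange.1 hi
  have hN : (0 : ℝ) < N := by exact_mod_cast (by omega : 0 < N)
  exact_mod_cast ((div_le_iff₀ hN).1 hc).trans_lt hci

theorem mem_ermRange_of_le {k i : ℕ} (hk : k ∈ ermRange c N) (hki : k ≤ i) (hiN : i ≤ N) :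
    i ∈ ermRange c N := by
  obtain ⟨hk1, -, hkc⟩ := mem_ermRange.1 hk
  exact mem_ermRange.2 ⟨hk1.trans hki, hiN, hkc.trans_le (by exact_mod_cast hki)⟩

variable (v : Fin N → ℝ)

theorem ERM_eq_zero (h : ¬c * N < N) : ERM c v = 0 := by
  rw [← ermRange_nonempty_iff, Finset.not_nonempty_iff_eq_empty] at h
  change sortedVal v (argmaxIdx (ermRange c N) _) = 0
  simp [h, argmaxIdx, sortedVal_zero]

theorem isGreatest_ERMIdx (h : (ermRange c N).Nonempty) :
    IsGreatest {i | i ∈ ermRange c N ∧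
      ∀ j ∈ ermRange c N, j * sortedVal v j ≤ i * sortedVal v i} (ERMIdx c v) :=
  isGreatest_argmaxIdx h _

theorem countGE_mul_le_ERMIdx_mul_ERM {t : ℝ} (ht : countGE v t ∈ ermRange c N) :
    countGE v t * t ≤ ERMIdx c v * ERM c v := by
  obtain ⟨hj1, hjN, -⟩ := mem_ermRange.1 ht
  calc countGE v t * t ≤ countGE v t * sortedVal v (countGE v t) := by
        gcongr; exact (le_sortedVal_iff v hj1 hjN).2 le_rfl
    _ ≤ ERMIdx c v * ERM c v := (isGreatest_ERMIdx v ⟨_, ht⟩).1.2 _ ht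

-- strict because ties are broken towards the larger index
theorem countGE_mul_lt_ERMIdx_mul_ERM {u : ℝ} (hu : countGE v u ∈ ermRange c N)
    (hk : ERMIdx c v < countGE v u) : countGE v u * u < ERMIdx c v * ERM c v := by
  have hg := isGreatest_ERMIdx v ⟨_, hu⟩
  obtain ⟨hq1, hqN, -⟩ := mem_ermRange.1 hu
  by_contra! hle
  refine hk.not_ge (hg.2 ⟨hu, fun j hj => (hg.1.2 j hj).trans (hle.trans ?_)⟩)
  gcongr; exact (le_sortedVal_iff v hq1 hqN).2 le_rfl

theorem countGE_mul_countGE_lt_ERMIdx_mul_ERMIdx (v' : Fin N → ℝ) (ht : 0 ≤ ERM c v)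
    (hj : countGE v' (ERM c v) ∈ ermRange c N) (hq : countGE v (ERM c v') ∈ ermRange c N)
    (hkq : ERMIdx c v < countGE v (ERM c v')) :
    (countGE v (ERM c v') * countGE v' (ERM c v) : ℝ) < ERMIdx c v * ERMIdx c v' := by
  refine lt_of_mul_lt_mul_right ?_ ht
  calc (countGE v (ERM c v') * countGE v' (ERM c v) : ℝ) * ERM c v
      _ ≤ countGE v (ERM c v') * (ERMIdx c v' * ERM c v') := by
        rw [mul_assoc]
        exact mul_le_mul_of_nonneg_left (countGE_mul_le_ERMIdx_mul_ERM v' hj) (Nat.cast_nonneg _)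
      _ = ERMIdx c v' * (countGE v (ERM c v') * ERM c v') := by ring
      _ < ERMIdx c v' * (ERMIdx c v * ERM c v) := by
        have hk'1 := (mem_ermRange.1 ((isGreatest_ERMIdx v' ⟨_, hj⟩).1.1)).1
        exact mul_lt_mul_of_pos_left (countGE_mul_lt_ERMIdx_mul_ERM v hq hkq) (Nat.cast_pos.2 hk'1)
      _ = ERMIdx c v * ERMIdx c v' * ERM c v := by ring

end ERM

theorem ERM_monotone_top_general (m n : ℕ) (c : ℝ)
    (hc : (m : ℝ) / (m + n) ≤ c)
    (vI : Fin m → ℝ) (hvI : ∀ i, 0 ≤ vI i)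
    (w : Fin n → ℝ) (hw : ∀ j, 0 ≤ w j)
    (vbar : Fin m → ℝ) (hvbar : ∀ i j, w j ≤ vbar i) :
    ERM c (Fin.append vI w) ≤ ERM c (Fin.append vbar w) := by
  by_cases hN : c * (m + n : ℕ) < (m + n : ℕ)
  swap
  · rw [ERM_eq_zero _ hN, ERM_eq_zero _ hN]
  set va := Fin.append vI w
  set vb := Fin.append vbar w
  have hS := ermRange_nonempty_iff.2 hN
  have hk := (isGreatest_ERMIdx va hS).1.1
  have hk' := (isGreatest_ERMIdx vb hS).1.1
  set k := ERMIdx c va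
  set t := ERM c va
  set u := ERM c vb
  obtain ⟨hk1, hkN, -⟩ := mem_ermRange.1 hk
  obtain ⟨hk'1, hk'N, -⟩ := mem_ermRange.1 hk'
  have hmk : m < k := lt_of_mem_ermRange (by push_cast; exact hc) hk
  have ht : 0 ≤ t := sortedVal_nonneg (Fin.addCases (by simpa [va]) (by simpa [va])) _
  have hkt : k ≤ countGE va t := (le_sortedVal_iff va hk1 hkN).1 le_rfl
  by_contra! hut
  have hjk' : countGE vb t < ERMIdx c vb :=
    lt_of_not_ge fun h => hut.not_ge ((le_sortedVal_iff vb hk'1 hk'N).2 h)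
  have hexch := mul_le_countGE_mul_countGE hvbar hmk hkt
    ((le_sortedVal_iff vb hk'1 hk'N).1 le_rfl) hjk'
  have hkq : k < countGE va u := lt_of_not_ge fun h =>
    (hexch.trans (Nat.mul_le_mul_right _ h)).not_gt (Nat.mul_lt_mul_of_pos_left hjk' (by omega))
  have hj := mem_ermRange_of_le hk
    (hkt.trans (countGE_append_le_countGE_append hvbar (hmk.trans_le hkt))) (countGE_le vb t)
  have hq := mem_ermRange_of_le hk hkq.le (countGE_le va u)
  exact hexch.not_gt <| by
    exact_mod_cast countGE_mul_countGE_lt_ERMIdx_mul_ERMIdx va vb ht hj hq hkq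

/-- Claim 1 in the paper. Let `P = ERM^c` with `c ≥ m/N`
(`N = m + n` total samples, `0 ≤ c < 1`). For any nonnegative `vI`, `w = v_{-I}`,
and any `vbar` with `min vbar ≥ max w`, we have `P(vbar, w) ≥ P(vI, w)`. -/
theorem ERM_monotone_top (m n : ℕ) (c : ℝ)
    (hc : (m : ℝ) / (m + n) ≤ c) (hc1 : c < 1)
    (vI : Fin m → ℝ) (hvI : ∀ i, 0 ≤ vI i)
    (w : Fin n → ℝ) (hw : ∀ j, 0 ≤ w j)
    (vbar : Fin m → ℝ) (hvbar : ∀ i j, w j ≤ vbar i) :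
    ERM c (Fin.append vI w) ≤ ERM c (Fin.append vbar w) :=
  ERM_monotone_top_general m n c hc vI hvI w hw vbar hvbar
end

section
/- Let 0 < α < 1 and let F be an α-strongly regular distribution with density f, and let v* = argmax_v v·(1−F(v)) be its monopoly price. Then for every x ≥ v*, 1 − F(x) ≤ ( v* / ((1−α)x + α·v*) )^{1/(1−α)}; consequently, if X is the maximum of N i.i.d. samples from F, then for every x ≥ v*, Pr[X > x] ≤ N·( v* / ((1−α)x + α·v*) )^{1/(1−α)}. -/
open MeasureTheory ProbabilityTheory Filter

/-!
At the monopoly price the virtual value vanishes, so `α`-strong regularity gives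
`φ(y) ≥ α (y - v*)` above `v*`: the inverse hazard rate `(1 - F) / f` is at most
`L(y) = (1 - α) y + α v*`. Hence `(1 - F) L ^ (1 / (1 - α))` is nonincreasing on `[v*, ∞)`, and
at `v*` it is at most `v* ^ (1 / (1 - α))`. The maximum of `N` samples is handled by the union bound.

As `f` is only a density, `φ(v*) = 0` is replaced by `f` exceeding `(1 - F(v*)) / v* - ε` somewhere
just above `v*`, and the differential inequality is integrated through difference quotients.
-/

open Set
open scoped Topology

lemma le_left_of_eventually_slope_right_lt {Φ : ℝ → ℝ} {a b : ℝ} (hΦ : ContinuousOn Φ (Icc a b))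
    (hslope : ∀ θ ∈ Ico a b, ∀ r > 0, ∀ᶠ z in 𝓝[>] θ, slope Φ θ z < r) :
    ∀ ⦃t⦄, t ∈ Icc a b → Φ t ≤ Φ a :=
  image_le_of_liminf_slope_right_le_deriv_boundary (B' := fun _ => 0) hΦ le_rfl
    continuousOn_const (fun θ _ => hasDerivWithinAt_const θ _ _)
    fun θ hθ r hr => (hslope θ hθ r hr).frequently

lemma mul_rpow_le_of_sub_le {G : ℝ → ℝ} {p q a b : ℝ} (hp : 0 < p) (hab : a ≤ b)
    (hLa : 0 < p * a + q) (hG : ContinuousOn G (Icc a b))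
    (hstep : ∀ θ z, a ≤ θ → θ < z → z ≤ b → G z - G θ ≤ -((z - θ) * (G z / (p * z + q)))) :
    G b * (p * b + q) ^ (1 / p) ≤ G a * (p * a + q) ^ (1 / p) := by
  set c := 1 / p
  have hcp : c * p = 1 := one_div_mul_cancel hp.ne'
  set L : ℝ → ℝ := fun t => p * t + q
  have hLpos : ∀ t, a ≤ t → 0 < L t := fun t ht => by simp only [L]; nlinarith
  have hLcont : Continuous L := by fun_prop
  refine le_left_of_eventually_slope_right_lt
    (hG.mul (hLcont.continuousOn.rpow_const fun t ht => Or.inl (hLpos t ht.1).ne'))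
    (fun θ hθ r hr => ?_) (right_mem_Icc.2 hab)
  have hLθ := hLpos θ hθ.1
  have hW : HasDerivAt (fun t => L t ^ c) (c * L θ ^ (c - 1) * p) θ :=
    (Real.hasDerivAt_rpow_const (Or.inl hLθ.ne')).comp θ
      (((hasDerivAt_id θ).const_mul p).add_const q |>.congr_deriv (mul_one p))
  have hGθ : Tendsto G (𝓝[>] θ) (𝓝 (G θ)) :=
    (hG.continuousWithinAt (Ico_subset_Icc_self hθ)).mono_left
      (nhdsWithin_le_of_mem (Icc_mem_nhdsGT_of_mem hθ))
  -- `L ^ (-c)` solves `G' = -G / L`, so this bound on the difference quotients of `G * L ^ c`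
  -- tends to `0`
  set g : ℝ → ℝ := fun z => -(G z / L z) * L z ^ c + G θ * slope (fun t => L t ^ c) θ z
  have hg : Tendsto g (𝓝[>] θ) (𝓝 0) := by
    have h0 : -(G θ / L θ) * L θ ^ c + G θ * (c * L θ ^ (c - 1) * p) = 0 := by
      rw [Real.rpow_sub_one hLθ.ne']
      field_simp
      linear_combination (G θ * L θ ^ c) * hcp
    rw [← h0]
    refine ((hGθ.div ((hLcont.tendsto θ).mono_left nhdsWithin_le_nhds) hLθ.ne').neg.mul
      (((hLcont.rpow_const fun t => Or.inr (by positivity)).tendsto θ).mono_left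
        nhdsWithin_le_nhds)).add ?_
    exact ((hasDerivAt_iff_tendsto_slope.mp hW).mono_left
      (nhdsWithin_mono θ fun z hz => ne_of_gt hz)).const_mul _
  filter_upwards [hg.eventually_lt_const hr, Ioo_mem_nhdsGT hθ.2] with z hgz hz
  have hslopeG : slope G θ z ≤ -(G z / L z) := by
    rw [slope_def_field, div_le_iff₀ (sub_pos.2 hz.1)]
    linarith [hstep θ z hθ.1 hz.1 hz.2.le]
  calc slope (fun t => G t * L t ^ c) θ z
      = slope G θ z * L z ^ c + G θ * slope (fun t => L t ^ c) θ z := by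
        simp only [slope_def_field]
        field_simp
        ring
    _ ≤ g z := by
        simp only [g]
        gcongr
        exact (Real.rpow_pos_of_pos (hLpos z (hθ.1.trans hz.1.le)) c).le
    _ < r := hgz

section Density

variable {μ : Measure ℝ} [IsProbabilityMeasure μ]

lemma measure_Ioc_eq_ofReal_cdf_sub (s t : ℝ) :
    μ (Ioc s t) = ENNReal.ofReal (cdf μ t - cdf μ s) := by
  rw [← (cdf μ).measure_Ioc, measure_cdf]

lemma measure_Ioi_eq_ofReal_one_sub_cdf (x : ℝ) : μ (Ioi x) = ENNReal.ofReal (1 - cdf μ x) := by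
  rw [← (cdf μ).measure_Ioi (tendsto_cdf_atTop μ), measure_cdf]

lemma continuous_cdf [NullSingletonClass μ] : Continuous (cdf μ) := by
  refine continuous_iff_continuousAt.2 fun p => ?_
  rw [(monotone_cdf μ).continuousAt_iff_leftLim_eq_rightLim, (cdf μ).rightLim_eq]
  have hp := (cdf μ).measure_singleton p
  rw [measure_cdf, measure_singleton, eq_comm, ENNReal.ofReal_eq_zero] at hp
  linarith [(monotone_cdf μ).leftLim_le (le_refl p)]

variable {f : ℝ → ℝ}

lemma cdf_sub_cdf_le_of_density_le (hμf : μ = volume.withDensity fun x => ENNReal.ofReal (f x))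
    {s t C : ℝ} (hst : s ≤ t) (hC0 : 0 ≤ C) (hC : ∀ z ∈ Ioc s t, f z ≤ C) :
    cdf μ t - cdf μ s ≤ C * (t - s) := by
  have h : μ (Ioc s t) ≤ ENNReal.ofReal (C * (t - s)) := by
    rw [hμf, withDensity_apply _ measurableSet_Ioc, ENNReal.ofReal_mul hC0, ← Real.volume_Ioc,
      ← setLIntegral_const]
    exact setLIntegral_mono' measurableSet_Ioc fun z hz => ENNReal.ofReal_le_ofReal (hC z hz)
  rwa [measure_Ioc_eq_ofReal_cdf_sub,
    ENNReal.ofReal_le_ofReal_iff (mul_nonneg hC0 (sub_nonneg.2 hst))] at h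

lemma le_cdf_sub_cdf_of_le_density (hμf : μ = volume.withDensity fun x => ENNReal.ofReal (f x))
    {s t C : ℝ} (hst : s ≤ t) (hC0 : 0 ≤ C) (hC : ∀ z ∈ Ioc s t, C ≤ f z) :
    C * (t - s) ≤ cdf μ t - cdf μ s := by
  have h : ENNReal.ofReal (C * (t - s)) ≤ μ (Ioc s t) := by
    rw [hμf, withDensity_apply _ measurableSet_Ioc, ENNReal.ofReal_mul hC0, ← Real.volume_Ioc,
      ← setLIntegral_const]
    exact setLIntegral_mono' measurableSet_Ioc fun z hz => ENNReal.ofReal_le_ofReal (hC z hz)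
  rwa [measure_Ioc_eq_ofReal_cdf_sub, ENNReal.ofReal_le_ofReal_iff
    (sub_nonneg.2 (monotone_cdf μ hst))] at h

lemma exists_mem_support_of_cdf_lt (hμf : μ = volume.withDensity fun x => ENNReal.ofReal (f x))
    {s t : ℝ} (h : cdf μ s < cdf μ t) : ∃ z ∈ Ioc s t, z ∈ Function.support f := by
  by_contra! hf
  have hst : s ≤ t := le_of_not_gt fun hts => h.not_ge (monotone_cdf μ hts.le)
  have := cdf_sub_cdf_le_of_density_le hμf hst le_rfl fun z hz =>
    (Function.notMem_support.1 (hf z hz)).le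
  linarith

end Density

section StronglyRegular

variable {μ : Measure ℝ} [IsProbabilityMeasure μ] {f : ℝ → ℝ} {α vstar : ℝ}

-- A weak form of the first-order condition `f(v*) ≥ (1 - F(v*)) / v*`.
lemma exists_density_gt_of_monopoly (hμf : μ = volume.withDensity fun x => ENNReal.ofReal (f x))
    (hv0 : 0 ≤ vstar) (hopt : ∀ v : ℝ, v * (1 - cdf μ v) ≤ vstar * (1 - cdf μ vstar))
    {y C : ℝ} (hy : vstar < y) (hC0 : 0 ≤ C) (hC : C * vstar < 1 - cdf μ vstar) :
    ∃ z ∈ Ioc vstar y, C < f z := by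
  by_contra! hf
  have hle : ∀ v ∈ Ioc vstar y, 1 - cdf μ v ≤ C * vstar := fun v hv => by
    have hmass := cdf_sub_cdf_le_of_density_le hμf hv.1.le hC0 fun z hz =>
      hf z ⟨hz.1, hz.2.trans hv.2⟩
    have hvv : 0 < v - vstar := sub_pos.2 hv.1
    refine le_of_mul_le_mul_left ?_ hvv
    nlinarith [hopt v]
  have hlim : Tendsto (fun v => 1 - cdf μ v) (𝓝[>] vstar) (𝓝 (1 - cdf μ vstar)) :=
    tendsto_const_nhds.sub (((cdf μ).right_continuous vstar).tendsto.mono_left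
      (nhdsWithin_mono _ Ioi_subset_Ici_self))
  linarith [le_of_tendsto hlim (eventually_of_mem (Ioc_mem_nhdsGT hy) hle)]

lemma mem_support_of_monopoly_lt (hμf : μ = volume.withDensity fun x => ENNReal.ofReal (f x))
    (hOC : OrdConnected (Function.support f)) (hv0 : 0 ≤ vstar)
    (hopt : ∀ v : ℝ, v * (1 - cdf μ v) ≤ vstar * (1 - cdf μ vstar))
    {y : ℝ} (hy : vstar < y) (hGy : 0 < 1 - cdf μ y) : y ∈ Function.support f := by
  have hbelow : cdf μ vstar < cdf μ y := by nlinarith [hopt y]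
  obtain ⟨t, hyt⟩ : ∃ t, cdf μ y < cdf μ t :=
    ((tendsto_cdf_atTop μ).eventually_const_lt (by linarith)).exists
  obtain ⟨z₁, hz₁, hz₁S⟩ := exists_mem_support_of_cdf_lt hμf hbelow
  obtain ⟨z₂, hz₂, hz₂S⟩ := exists_mem_support_of_cdf_lt hμf hyt
  exact hOC.out hz₁S hz₂S ⟨hz₁.2, hz₂.1.le⟩

lemma one_sub_cdf_le_density_mul (hμf : μ = volume.withDensity fun x => ENNReal.ofReal (f x))
    (hf0 : ∀ x, 0 ≤ f x) (hOC : OrdConnected (Function.support f))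
    (hφ : ∀ x ∈ Function.support f, ∀ y ∈ Function.support f, x < y →
      α * (y - x) ≤ (y - (1 - cdf μ y) / f y) - (x - (1 - cdf μ x) / f x))
    (hα1 : α ≤ 1) (hvpos : 0 < vstar)
    (hopt : ∀ v : ℝ, v * (1 - cdf μ v) ≤ vstar * (1 - cdf μ vstar))
    {y : ℝ} (hy : vstar < y) : 1 - cdf μ y ≤ f y * ((1 - α) * y + α * vstar) := by
  have hL : ∀ t, vstar ≤ t → vstar ≤ (1 - α) * t + α * vstar := fun t ht => by nlinarith
  rcases le_or_gt (1 - cdf μ y) 0 with hGy | hGy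
  · exact hGy.trans (mul_nonneg (hf0 y) (hvpos.le.trans (hL y hy.le)))
  have hyS := mem_support_of_monopoly_lt hμf hOC hvpos.le hopt hy hGy
  have hfy : 0 < f y := (hf0 y).lt_of_ne' hyS
  by_contra! hlt
  set η := (1 - cdf μ y) / f y - ((1 - α) * y + α * vstar) with hη_def
  have hη : 0 < η := by rw [hη_def, sub_pos, lt_div_iff₀ hfy]; linarith
  have hGv : 1 - cdf μ y ≤ 1 - cdf μ vstar := by linarith [monotone_cdf μ hy.le]
  set C := (1 - cdf μ vstar) / (vstar + η)
  have hC : C * vstar < 1 - cdf μ vstar := by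
    rw [div_mul_eq_mul_div, div_lt_iff₀ (by linarith)]
    nlinarith
  have hC0 : 0 ≤ C := div_nonneg (by linarith) (by linarith)
  obtain ⟨z, hz, hCz⟩ := exists_density_gt_of_monopoly hμf hvpos.le hopt hy hC0 hC
  have hzS : z ∈ Function.support f := (hC0.trans_lt hCz).ne'
  have hfz : 0 < f z := (hf0 z).lt_of_ne' hzS
  -- strong regularity propagates the excess `η` of the inverse hazard rate down to `z`
  have hinv : vstar + η ≤ (1 - cdf μ z) / f z := by
    have := hL z hz.1.le
    rcases hz.2.lt_or_eq with hzy | rfl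
    · linarith [hφ z hzS y hyS hzy]
    · linarith
  have : f z ≤ C := by
    rw [le_div_iff₀ hfz] at hinv
    rw [le_div_iff₀ (by linarith)]
    nlinarith [monotone_cdf μ hz.1.le]
  linarith

lemma one_sub_cdf_le_rpow (hμf : μ = volume.withDensity fun x => ENNReal.ofReal (f x))
    (hf0 : ∀ x, 0 ≤ f x) (hOC : OrdConnected (Function.support f))
    (hφ : ∀ x ∈ Function.support f, ∀ y ∈ Function.support f, x < y →
      α * (y - x) ≤ (y - (1 - cdf μ y) / f y) - (x - (1 - cdf μ x) / f x))
    (hα1 : α < 1) (hvpos : 0 < vstar)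
    (hopt : ∀ v : ℝ, v * (1 - cdf μ v) ≤ vstar * (1 - cdf μ vstar))
    {x : ℝ} (hx : vstar ≤ x) :
    1 - cdf μ x ≤ (vstar / ((1 - α) * x + α * vstar)) ^ (1 / (1 - α)) := by
  have hcont : Continuous (cdf μ) := by
    have : NullSingletonClass μ := hμf ▸ inferInstance
    exact continuous_cdf
  have hL : ∀ t, vstar ≤ t → vstar ≤ (1 - α) * t + α * vstar := fun t ht => by nlinarith
  have hLv : (1 - α) * vstar + α * vstar = vstar := by ring
  have hstep : ∀ θ z, vstar ≤ θ → θ < z → z ≤ x → (1 - cdf μ z) - (1 - cdf μ θ) ≤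
      -((z - θ) * ((1 - cdf μ z) / ((1 - α) * z + α * vstar))) := by
    intro θ z hθ hθz _
    have hLz := hvpos.trans_le (hL z (hθ.trans hθz.le))
    have := le_cdf_sub_cdf_of_le_density hμf hθz.le
      (div_nonneg (sub_nonneg.2 (cdf_le_one μ z)) hLz.le) fun ζ hζ => ?_
    · linarith
    have hLζ := hvpos.trans_le (hL ζ (hθ.trans hζ.1.le))
    calc (1 - cdf μ z) / ((1 - α) * z + α * vstar)
        ≤ (1 - cdf μ ζ) / ((1 - α) * ζ + α * vstar) :=
          div_le_div₀ (by linarith [cdf_le_one μ ζ]) (by linarith [monotone_cdf μ hζ.2]) hLζ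
            (by nlinarith [hζ.2])
      _ ≤ f ζ := (div_le_iff₀ hLζ).2 <|
          one_sub_cdf_le_density_mul hμf hf0 hOC hφ hα1.le hvpos hopt (hθ.trans_lt hζ.1)
  have hGronwall := mul_rpow_le_of_sub_le (G := fun t => 1 - cdf μ t) (sub_pos.2 hα1) hx (by rwa [hLv])
    (continuous_const.sub hcont).continuousOn hstep
  rw [hLv] at hGronwall
  rw [Real.div_rpow hvpos.le (hvpos.trans_le (hL x hx)).le,
    le_div_iff₀ (Real.rpow_pos_of_pos (hvpos.trans_le (hL x hx)) _)]
  exact hGronwall.trans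
    (mul_le_of_le_one_left (by positivity) (by linarith [cdf_nonneg μ vstar]))

end StronglyRegular

lemma measure_pi_exists_mem_le {ι Ω : Type*} [Fintype ι] [MeasurableSpace Ω] (μ : Measure Ω)
    [IsProbabilityMeasure μ] {s : Set Ω} (hs : MeasurableSet s) :
    Measure.pi (fun _ : ι => μ) {w | ∃ i, w i ∈ s} ≤ Fintype.card ι * μ s := by
  calc Measure.pi (fun _ : ι => μ) {w | ∃ i, w i ∈ s}
      = Measure.pi (fun _ : ι => μ) (⋃ i, Function.eval i ⁻¹' s) := by
        congr 1
        ext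
        simp
    _ ≤ ∑ i, Measure.pi (fun _ : ι => μ) (Function.eval i ⁻¹' s) := measure_iUnion_fintype_le _ _
    _ = Fintype.card ι * μ s := by
        simp [(measurePreserving_eval (fun _ : ι => μ) _).measure_preimage hs.nullMeasurableSet]

open MeasureTheory ProbabilityTheory in
theorem alphaStronglyRegular_tail_bound_general (α : ℝ) (hα1 : α < 1)
    (μ : Measure ℝ) (hμ : IsProbabilityMeasure μ) (hreg : IsAlphaStronglyRegular α μ)
    (vstar : ℝ) (hvpos : 0 < vstar)
    (hopt : ∀ v : ℝ, v * (1 - cdf μ v) ≤ vstar * (1 - cdf μ vstar))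
    (x : ℝ) (hx : vstar ≤ x) (N : ℕ) :
    1 - cdf μ x ≤ (vstar / ((1 - α) * x + α * vstar)) ^ (1 / (1 - α)) ∧
    (Measure.pi fun _ : Fin N => μ) {w | ∃ i, x < w i} ≤
      ENNReal.ofReal ((N : ℝ) * (vstar / ((1 - α) * x + α * vstar)) ^ (1 / (1 - α))) := by
  obtain ⟨f, hf0, hμf, hOC, -, hφ⟩ := hreg
  have htail := one_sub_cdf_le_rpow hμf hf0 hOC hφ hα1 hvpos hopt hx
  refine ⟨htail, ?_⟩
  calc (Measure.pi fun _ : Fin N => μ) {w | ∃ i, x < w i}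
      ≤ N * μ (Ioi x) := by simpa using measure_pi_exists_mem_le (ι := Fin N) μ measurableSet_Ioi
    _ = ENNReal.ofReal (N * (1 - cdf μ x)) := by
        rw [measure_Ioi_eq_ofReal_one_sub_cdf, ENNReal.ofReal_mul (Nat.cast_nonneg N),
          ENNReal.ofReal_natCast]
    _ ≤ _ := ENNReal.ofReal_le_ofReal (by gcongr)

open MeasureTheory ProbabilityTheory in
/-- tail bound for `α`-strongly regular distributions. For
`0 < α < 1` and an `α`-strongly regular distribution with monopoly price
`v* = argmax_v v·(1 − F v)`: for every `x ≥ v*`,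
`1 − F(x) ≤ (v*/((1−α)x + α·v*))^{1/(1−α)}`; consequently the maximum `X` of `N`
i.i.d. samples satisfies `Pr[X > x] ≤ N·(v*/((1−α)x + α·v*))^{1/(1−α)}`. -/
theorem alphaStronglyRegular_tail_bound (α : ℝ) (hα0 : 0 < α) (hα1 : α < 1)
    (μ : Measure ℝ) (hμ : IsProbabilityMeasure μ) (hreg : IsAlphaStronglyRegular α μ)
    (vstar : ℝ) (hvpos : 0 < vstar)
    (hopt : ∀ v : ℝ, v * (1 - cdf μ v) ≤ vstar * (1 - cdf μ vstar))
    (x : ℝ) (hx : vstar ≤ x) (N : ℕ) :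
    1 - cdf μ x ≤ (vstar / ((1 - α) * x + α * vstar)) ^ (1 / (1 - α)) ∧
    (Measure.pi fun _ : Fin N => μ) {w | ∃ i, x < w i} ≤
      ENNReal.ofReal ((N : ℝ) * (vstar / ((1 - α) * x + α * vstar)) ^ (1 / (1 - α))) :=
  alphaStronglyRegular_tail_bound_general α hα1 μ hμ hreg vstar hvpos hopt x hx N
end

section
/- Let D > 1, let F be the distribution supported in [1, D] (in fact a bounded distribution), and let Δ_{N,m}^worst(c) denote the worst-case incentive-awareness measure of ERM^c under F. Then for all integers N, m with 1 ≤ m ≤ N/(2D) (in particular whenever m = o(√N)) and every c with m/N ≤ c ≤ 1/(2D): Δ_{N,m}^worst(c) = Δ_{N,m}^worst(m/N). That is, for bounded distributions the worst-case incentive-awareness measure of ERM^c is identical for every c in the stated range. -/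
open MeasureTheory ProbabilityTheory Filter

/-!
Almost surely the `N - m` samples that cannot be manipulated lie in `[1, D]`, so whatever the
other `m` bids are, at most `m` of all `N` values lie above `D` and at most `m` below `1`. Then
`v_i ≤ D` for `i > m` and `v_{N-m} ≥ 1`: the index `N - m` earns revenue at least `N - m > N / 2`,
while every index `m < i ≤ cN` earns at most `cND ≤ N / 2`. For `m / N ≤ c ≤ 1 / (2D)` the guard
`i > cN` of `ERM^c` thus only discards indices that lose to `N - m`, and `ERM^c = ERM^{m/N}`.
-/

open Finset

namespace List.Pairwise

variable {α : Type*} [LinearOrder α] {l : List α} {k : ℕ} {a : α}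

theorem length_sub_le_countP_of_lt_getElem (hl : l.Pairwise (· ≤ ·)) (hk : k < l.length)
    (ha : a < l[k]) : l.length - k ≤ l.countP (a < ·) := by
  have hdrop : ∀ b ∈ l.drop k, a < b := by
    have hsorted := hl.drop (i := k)
    rw [List.drop_eq_getElem_cons hk] at hsorted ⊢
    rintro b (_ | ⟨_, hb⟩)
    · exact ha
    · exact ha.trans_le ((List.pairwise_cons.1 hsorted).1 b hb)
  calc l.length - k = (l.drop k).length := (List.length_drop ..).symm
    _ = (l.drop k).countP (a < ·) :=
        (List.countP_eq_length.2 fun b hb => by simpa using hdrop b hb).symm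
    _ ≤ l.countP (a < ·) := (List.drop_sublist k l).countP_le

theorem succ_le_countP_of_getElem_lt (hl : l.Pairwise (· ≤ ·)) (hk : k < l.length)
    (ha : l[k] < a) : k + 1 ≤ l.countP (· < a) := by
  have htake : ∀ b ∈ l.take (k + 1), b < a := by
    intro b hb
    obtain ⟨j, hj, rfl⟩ := List.mem_iff_getElem.1 hb
    rw [List.getElem_take]
    rw [List.length_take] at hj
    rcases Nat.lt_or_ge j k with hjk | hjk
    · exact (List.pairwise_iff_getElem.1 hl j k (by omega) hk hjk).trans_lt ha
    · simpa [show j = k by omega] using ha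
  calc k + 1 = (l.take (k + 1)).length := by simp [List.length_take, hk]
    _ = (l.take (k + 1)).countP (· < a) :=
        (List.countP_eq_length.2 fun b hb => by simpa using htake b hb).symm
    _ ≤ l.countP (· < a) := (List.take_sublist _ l).countP_le

end List.Pairwise

section SortedVal

variable {N : ℕ} {x : Fin N → ℝ} {a : ℝ} {i : ℕ}

theorem length_sort_ofFn (x : Fin N → ℝ) :
    (Multiset.sort (List.ofFn x : Multiset ℝ) (· ≤ ·)).length = N := by
  simp

theorem countP_sort_ofFn (x : Fin N → ℝ) (p : ℝ → Prop) [DecidablePred p] :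
    (Multiset.sort (List.ofFn x : Multiset ℝ) (· ≤ ·)).countP (fun b => decide (p b)) =
      #{j | p (x j)} := by
  rw [← Multiset.coe_countP, Multiset.sort_eq, List.ofFn_eq_map, ← Multiset.map_coe,
    Multiset.countP_map]
  rfl

theorem sortedVal_le_of_card_lt (hi : i ≤ N) (h : #{j | a < x j} < i) : sortedVal x i ≤ a := by
  have hk : N - i < (Multiset.sort (List.ofFn x : Multiset ℝ) (· ≤ ·)).length := by
    rw [length_sort_ofFn]; omega
  rw [sortedVal, List.getD_eq_getElem _ _ hk]
  by_contra! hlt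
  have := (Multiset.pairwise_sort _ _).length_sub_le_countP_of_lt_getElem hk hlt
  rw [length_sort_ofFn, countP_sort_ofFn] at this
  omega

theorem le_sortedVal_of_card_add_le (hi : 1 ≤ i) (h : #{j | x j < a} + i ≤ N) :
    a ≤ sortedVal x i := by
  have hk : N - i < (Multiset.sort (List.ofFn x : Multiset ℝ) (· ≤ ·)).length := by
    rw [length_sort_ofFn]; omega
  rw [sortedVal, List.getD_eq_getElem _ _ hk]
  by_contra! hlt
  have := (Multiset.pairwise_sort _ _).succ_le_countP_of_getElem_lt hk hlt
  rw [countP_sort_ofFn] at this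
  omega

end SortedVal

theorem argmaxIdx_eq_of_subset {S T : Finset ℕ} {f : ℕ → ℝ} {k : ℕ} (hST : S ⊆ T) (hk : k ∈ S)
    (hlt : ∀ i ∈ T, i ∉ S → f i < f k) : argmaxIdx S f = argmaxIdx T f := by
  suffices {i ∈ S | ∀ j ∈ S, f j ≤ f i} = {i ∈ T | ∀ j ∈ T, f j ≤ f i} by
    rw [argmaxIdx, argmaxIdx, this]
  ext i
  simp only [mem_filter]
  constructor
  · rintro ⟨hiS, hmax⟩
    refine ⟨hST hiS, fun j hj => ?_⟩
    by_cases hjS : j ∈ S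
    · exact hmax j hjS
    · exact (hlt j hj hjS).le.trans (hmax k hk)
  · rintro ⟨hiT, hmax⟩
    have hiS : i ∈ S := by
      by_contra hiS
      exact (hlt i hiT hiS).not_ge (hmax k (hST hk))
    exact ⟨hiS, fun j hj => hmax j (hST hj)⟩

theorem ERM_eq_of_card_notMem_Icc_le {D c c' : ℝ} {N m : ℕ} (hD : 1 ≤ D) (hc' : c' ≤ c)
    (hm : m ≤ c' * N) (hcD : c * N * D < N - m) {x : Fin N → ℝ}
    (hx : #{j | x j ∉ Set.Icc 1 D} ≤ m) : ERM c x = ERM c' x := by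
  have hcN : c' * N ≤ c * N := by gcongr
  have hcND : c * N ≤ c * N * D := le_mul_of_one_le_right (by linarith) hD
  have hmN : m < N := by exact_mod_cast (show (m : ℝ) < N by linarith)
  have hNm : ((N - m : ℕ) : ℝ) = N - m := Nat.cast_sub hmN.le
  have hle_D : ∀ i, m < i → i ≤ N → sortedVal x i ≤ D := fun i hmi hiN =>
    sortedVal_le_of_card_lt hiN <| lt_of_le_of_lt
      (card_le_card fun j => by simp only [mem_filter, Set.mem_Icc]; grind) (hx.trans_lt hmi)
  have hone_le : 1 ≤ sortedVal x (N - m) := le_sortedVal_of_card_add_le (by omega) <| by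
    have : #{j | x j < 1} ≤ #{j | x j ∉ Set.Icc 1 D} :=
      card_le_card fun j => by simp only [mem_filter, Set.mem_Icc]; grind
    omega
  rw [ERM, ERM, ERMIdx, ERMIdx]
  congr 1
  refine argmaxIdx_eq_of_subset (k := N - m) ?_ ?_ ?_
  · intro i
    simp only [mem_filter, mem_Icc]
    exact fun ⟨hi, hci⟩ => ⟨hi, hcN.trans_lt hci⟩
  · simp only [mem_filter, mem_Icc, hNm]
    exact ⟨⟨by omega, by omega⟩, by linarith⟩
  · intro i hi hni
    simp only [mem_filter, mem_Icc, not_and, not_lt] at hi hni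
    have hmi : m < i := by exact_mod_cast (show (m : ℝ) < i by linarith)
    have hiD : (i : ℝ) * sortedVal x i ≤ i * D := by gcongr; exact hle_D i hmi hi.1.2
    have hiN : (i : ℝ) * D ≤ c * N * D := by gcongr; exact hni hi.1
    have hNm_le : ((N - m : ℕ) : ℝ) ≤ (N - m : ℕ) * sortedVal x (N - m) :=
      le_mul_of_one_le_right (Nat.cast_nonneg _) hone_le
    rw [hNm] at hNm_le ⊢
    linarith

section IncentiveAwareness

variable {N : ℕ} {P Q : (Fin N → ℝ) → ℝ} {I : Finset (Fin N)} {v : Fin N → ℝ}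

theorem deltaIdx_congr (h : ∀ w, (∀ j ∉ I, w j = v j) → P w = Q w) :
    deltaIdx P I v = deltaIdx Q I v := by
  rw [deltaIdx, deltaIdx, h v fun _ _ => rfl]
  congr 3
  ext p
  refine exists_congr fun b => and_congr_right fun _ => ?_
  rw [h]
  intro j hj
  simp [hj]

theorem deltaWorstIdx_congr (h : ∀ w, (∀ j ∉ I, w j = v j) → P w = Q w) :
    deltaWorstIdx P I v = deltaWorstIdx Q I v := by
  rw [deltaWorstIdx, deltaWorstIdx]
  congr 1
  ext y
  refine exists_congr fun u => and_congr_right fun _ => ?_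
  rw [deltaIdx_congr fun w hw => h w fun j hj => ?_]
  simp [hw j hj, hj]

theorem DeltaWorstIdx_congr {μ : Measure ℝ} [SigmaFinite μ] {s : Set ℝ} (hs : μ sᶜ = 0)
    (h : ∀ w, (∀ j ∉ I, w j ∈ s) → P w = Q w) : DeltaWorstIdx μ P I = DeltaWorstIdx μ Q I := by
  refine integral_congr_ae ?_
  have hae : ∀ᵐ v ∂(Measure.pi fun _ => μ), ∀ j : Fin N, v j ∈ s :=
    ae_all_iff.2 fun j => Measure.pi_eval_preimage_null (fun _ => μ) hs
  filter_upwards [hae] with v hv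
  exact deltaWorstIdx_congr fun w hw => h w fun j hj => hw j hj ▸ hv j

end IncentiveAwareness

open MeasureTheory ProbabilityTheory in
/-- Proposition on the choice of `c`, bounded case. For a
distribution supported in `[1, D]` and integers `1 ≤ m ≤ N/(2D)`, the worst-case
incentive-awareness measure of `ERM^c` is the same for every `c` in the range
`[m/N, 1/(2D)]`: `Δ_{N,m}^worst(c) = Δ_{N,m}^worst(m/N)`. -/
theorem DeltaWorst_independent_of_c_bounded (D : ℝ) (hD : 1 < D)
    (μ : Measure ℝ) (hμ : IsProbabilityMeasure μ) (hsupp : μ (Set.Icc 1 D)ᶜ = 0)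
    (N m : ℕ) (hm1 : 1 ≤ m) (hm2 : (m : ℝ) ≤ (N : ℝ) / (2 * D))
    (c : ℝ) (hc1 : (m : ℝ) / N ≤ c) (hc2 : c ≤ 1 / (2 * D)) :
    DeltaWorst μ (fun v : Fin N → ℝ => ERM c v) m =
      DeltaWorst μ (fun v : Fin N → ℝ => ERM ((m : ℝ) / N) v) m := by
  have hDpos : 0 < 2 * D := by linarith
  have hmR : (1 : ℝ) ≤ m := by exact_mod_cast hm1
  have hmD : m * (2 * D) ≤ N := (le_div_iff₀ hDpos).1 hm2
  have hN : (0 : ℝ) < N := by nlinarith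
  have hcD : c * N * D ≤ N / 2 := by
    have : c * (2 * D) ≤ 1 := (le_div_iff₀ hDpos).1 hc2
    nlinarith
  refine DeltaWorstIdx_congr hsupp fun x hx => ERM_eq_of_card_notMem_Icc_le hD.le hc1
    (by rw [div_mul_cancel₀ _ hN.ne']) (by nlinarith) ?_
  calc #{j | x j ∉ Set.Icc 1 D} ≤ #(firstIdx N m) :=
        card_le_card fun j hj => by by_contra h; exact (mem_filter.1 hj).2 (hx j h)
    _ ≤ m := by rw [firstIdx, Fin.card_filter_val_lt]; exact min_le_right _ _
end
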